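/- Under the weighted-cSSIM assumptions, with W-cSSIM(f,g) := ∫_Ω q(x) dν(x) where q(x) = cSSIM computed with respect to ν_{w,x}, it holds |1 − W-cSSIM(f,g)| ≤ c ‖f − g‖²_{L²(Ω, ν)} with c = 4/c₂ + 1/c₁. -/

import Mathlib

open MeasureTheory

/-- Local (window-weighted) mean `μ_f(x) = ∫_Ω f(y) w(y−x) dν(y)`. -/
noncomputable def lmu {d : ℕ} (Ω : Set (Fin d → ℝ)) (ν : Measure (Fin d → ℝ))
    (w : (Fin d → ℝ) → ℝ) (f : (Fin d → ℝ) → ℝ) (x : Fin d → ℝ) : ℝ :=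
  ∫ y in Ω, f y * w (y - x) ∂ν

/-- Local (window-weighted) covariance `σ_{fg}(x)`. -/
noncomputable def lcov {d : ℕ} (Ω : Set (Fin d → ℝ)) (ν : Measure (Fin d → ℝ))
    (w : (Fin d → ℝ) → ℝ) (f g : (Fin d → ℝ) → ℝ) (x : Fin d → ℝ) : ℝ :=
  ∫ y in Ω, (f y - lmu Ω ν w f x) * (g y - lmu Ω ν w g x) * w (y - x) ∂ν

/-- Local cSSIM index `q(x)` computed with respect to the measure `ν_{w,x}`. -/
noncomputable def lq {d : ℕ} (Ω : Set (Fin d → ℝ)) (ν : Measure (Fin d → ℝ))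
    (w : (Fin d → ℝ) → ℝ) (f g : (Fin d → ℝ) → ℝ) (c1 c2 : ℝ) (x : Fin d → ℝ) : ℝ :=
  ((2 * lmu Ω ν w f x * lmu Ω ν w g x + c1) /
      ((lmu Ω ν w f x) ^ 2 + (lmu Ω ν w g x) ^ 2 + c1)) *
    ((2 * lcov Ω ν w f g x + c2) /
      (lcov Ω ν w f f x + lcov Ω ν w g g x + c2))

/-- Weighted continuous SSIM `W-cSSIM(f,g) = ∫_Ω q(x) dν(x)`. -/
noncomputable def wcSSIM {d : ℕ} (Ω : Set (Fin d → ℝ)) (ν : Measure (Fin d → ℝ))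
    (w : (Fin d → ℝ) → ℝ) (f g : (Fin d → ℝ) → ℝ) (c1 c2 : ℝ) : ℝ :=
  ∫ x in Ω, lq Ω ν w f g c1 c2 x ∂ν

/-!
At each point, `1 - q = (1 - A) + A (1 - B)` where `A ∈ (0, 1]` is the luminance factor and
`B ≤ 1` the structure factor, with `1 - A ≤ (μ_f - μ_g)² / c₁` and
`1 - B ≤ (σ_ff - 2σ_fg + σ_gg) / c₂`. Because the window has mass one, these two numerators add
up to the local energy `∫ (f - g)² w(· - x)`, and integrating that over `x` (Fubini, with the
dual normalization) returns `‖f - g‖²`. This gives the bound even with the constant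
`1 / c₁ + 1 / c₂`.
-/

section Kernel

variable {E : Type*} [NormedAddCommGroup E] [MeasurableSpace E] [OpensMeasurableSpace E]
  {μ : Measure E} {w : E → ℝ} {C : ℝ} {F G : E → ℝ}

theorem integrable_mul_kernel (hw : Continuous w) (hC : ∀ z, ‖w z‖ ≤ C)
    (hF : Integrable F μ) (x : E) : Integrable (fun y => F y * w (y - x)) μ :=
  hF.mul_bdd (hw.comp (continuous_id.sub continuous_const)).aestronglyMeasurable
    (.of_forall fun _ => hC _)

theorem integrable_mul_mul_kernel (hw : Continuous w) (hC : ∀ z, ‖w z‖ ≤ C)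
    (hF : MemLp F 2 μ) (hG : MemLp G 2 μ) (x : E) :
    Integrable (fun y => F y * G y * w (y - x)) μ :=
  integrable_mul_kernel hw hC (hF.integrable_mul hG) x

theorem continuous_integral_mul_kernel (hw : Continuous w) (hC : ∀ z, ‖w z‖ ≤ C)
    (hF : Integrable F μ) : Continuous fun x => ∫ y, F y * w (y - x) ∂μ :=
  continuous_of_dominated (bound := fun y => ‖F y‖ * C)
    (fun x => (integrable_mul_kernel hw hC hF x).aestronglyMeasurable)
    (fun x => .of_forall fun y => by
      rw [norm_mul]; exact mul_le_mul_of_nonneg_left (hC _) (norm_nonneg _))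
    (hF.norm.mul_const C)
    (.of_forall fun _ => continuous_const.mul (hw.comp (continuous_const.sub continuous_id)))

theorem continuous_integral_kernel [IsFiniteMeasure μ] (hw : Continuous w)
    (hC : ∀ z, ‖w z‖ ≤ C) : Continuous fun x => ∫ y, w (y - x) ∂μ := by
  simpa using continuous_integral_mul_kernel (μ := μ) hw hC (integrable_const (1 : ℝ))

theorem continuous_integral_kernel_swap [IsFiniteMeasure μ] (hw : Continuous w)
    (hC : ∀ z, ‖w z‖ ≤ C) : Continuous fun y => ∫ x, w (y - x) ∂μ := by
  simpa using continuous_integral_mul_kernel (μ := μ) (w := fun z => w (-z))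
    (hw.comp continuous_neg) (fun _ => hC _) (integrable_const (1 : ℝ))

variable [SecondCountableTopology E]

theorem integrable_prod_mul_kernel [IsFiniteMeasure μ] (hw : Continuous w)
    (hC : ∀ z, ‖w z‖ ≤ C) (hF : Integrable F μ) :
    Integrable (fun p : E × E => F p.2 * w (p.2 - p.1)) (μ.prod μ) :=
  (hF.comp_snd μ).mul_bdd (hw.comp (continuous_snd.sub continuous_fst)).aestronglyMeasurable
    (.of_forall fun _ => hC _)

theorem integrable_integral_mul_kernel [IsFiniteMeasure μ] (hw : Continuous w)
    (hC : ∀ z, ‖w z‖ ≤ C) (hF : Integrable F μ) :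
    Integrable (fun x => ∫ y, F y * w (y - x) ∂μ) μ :=
  (integrable_prod_mul_kernel hw hC hF).integral_prod_left

theorem integral_integral_mul_kernel [IsFiniteMeasure μ] (hw : Continuous w)
    (hC : ∀ z, ‖w z‖ ≤ C) (hF : Integrable F μ) (hW : ∀ᵐ y ∂μ, ∫ x, w (y - x) ∂μ = 1) :
    ∫ x, ∫ y, F y * w (y - x) ∂μ ∂μ = ∫ y, F y ∂μ := by
  rw [integral_integral_swap (integrable_prod_mul_kernel hw hC hF)]
  refine integral_congr_ae (hW.mono fun y hy => ?_)
  simp only [integral_const_mul, hy, mul_one]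

end Kernel

theorem abs_one_sub_ssim_le {a b sff sfg sgg c1 c2 : ℝ} (ha : 0 ≤ a) (hb : 0 ≤ b)
    (hff : 0 ≤ sff) (hgg : 0 ≤ sgg) (hD : 0 ≤ sff - 2 * sfg + sgg) (hc1 : 0 < c1) (hc2 : 0 < c2) :
    |1 - (2 * a * b + c1) / (a ^ 2 + b ^ 2 + c1) * ((2 * sfg + c2) / (sff + sgg + c2))| ≤
      (1 / c1 + 1 / c2) * ((a - b) ^ 2 + (sff - 2 * sfg + sgg)) := by
  set A := (2 * a * b + c1) / (a ^ 2 + b ^ 2 + c1)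
  set B := (2 * sfg + c2) / (sff + sgg + c2)
  have hA : 0 ≤ A := by positivity
  have hA1 : 1 - A = (a - b) ^ 2 / (a ^ 2 + b ^ 2 + c1) := by
    simp only [A]; field_simp; ring
  have hB1 : 1 - B = (sff - 2 * sfg + sgg) / (sff + sgg + c2) := by
    simp only [B]; field_simp; ring
  have hA0 : 0 ≤ 1 - A := by rw [hA1]; positivity
  have hB0 : 0 ≤ 1 - B := by rw [hB1]; positivity
  have hlum : 1 - A ≤ (a - b) ^ 2 / c1 := by
    rw [hA1]; gcongr; nlinarith
  have hstr : 1 - B ≤ (sff - 2 * sfg + sgg) / c2 := by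
    rw [hB1]; gcongr; linarith
  calc |1 - A * B| = (1 - A) + A * (1 - B) := by
        rw [abs_of_nonneg (by nlinarith)]; ring
    _ ≤ (1 - A) + (1 - B) := by gcongr; exact mul_le_of_le_one_left hB0 (by linarith)
    _ ≤ (a - b) ^ 2 / c1 + (sff - 2 * sfg + sgg) / c2 := add_le_add hlum hstr
    _ ≤ (a - b) ^ 2 / c1 + (sff - 2 * sfg + sgg) / c2 +
          ((a - b) ^ 2 / c2 + (sff - 2 * sfg + sgg) / c1) := le_add_of_nonneg_right (by positivity)
    _ = _ := by ring

section LocalStatistics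

variable {d : ℕ} {Ω : Set (Fin d → ℝ)} {ν : Measure (Fin d → ℝ)} {w : (Fin d → ℝ) → ℝ}
  {C c1 c2 : ℝ} {f g : (Fin d → ℝ) → ℝ} {x : Fin d → ℝ}

theorem lmu_nonneg (hw0 : ∀ z, 0 ≤ w z) (hf0 : 0 ≤ᵐ[ν.restrict Ω] f) : 0 ≤ lmu Ω ν w f x :=
  integral_nonneg_of_ae (hf0.mono fun _ hy => mul_nonneg hy (hw0 _))

theorem lcov_self_nonneg (hw0 : ∀ z, 0 ≤ w z) : 0 ≤ lcov Ω ν w f f x :=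
  integral_nonneg fun _ => mul_nonneg (mul_self_nonneg _) (hw0 _)

theorem lmu_sub (hw : Continuous w) (hC : ∀ z, ‖w z‖ ≤ C) (hf : Integrable f (ν.restrict Ω))
    (hg : Integrable g (ν.restrict Ω)) :
    lmu Ω ν w (fun y => f y - g y) x = lmu Ω ν w f x - lmu Ω ν w g x := by
  simp only [lmu, sub_mul]
  exact integral_sub (integrable_mul_kernel hw hC hf x) (integrable_mul_kernel hw hC hg x)

theorem continuous_lmu (hw : Continuous w) (hC : ∀ z, ‖w z‖ ≤ C)
    (hf : Integrable f (ν.restrict Ω)) : Continuous (lmu Ω ν w f) :=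
  continuous_integral_mul_kernel hw hC hf

variable [IsFiniteMeasure (ν.restrict Ω)]

theorem lcov_eq_integral_mul_add (hw : Continuous w) (hC : ∀ z, ‖w z‖ ≤ C)
    (hf : MemLp f 2 (ν.restrict Ω)) (hg : MemLp g 2 (ν.restrict Ω)) :
    lcov Ω ν w f g x = ∫ y in Ω, f y * g y * w (y - x) ∂ν +
      lmu Ω ν w f x * lmu Ω ν w g x * (∫ y in Ω, w (y - x) ∂ν - 2) := by
  set a := lmu Ω ν w f x
  set b := lmu Ω ν w g x
  have hfw := integrable_mul_kernel hw hC (hf.integrable one_le_two) x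
  have hgw := integrable_mul_kernel hw hC (hg.integrable one_le_two) x
  have hfgw := integrable_mul_mul_kernel hw hC hf hg x
  have hW := integrable_mul_kernel (μ := ν.restrict Ω) hw hC (integrable_const (1 : ℝ)) x
  have hexpand : ∀ y, (f y - a) * (g y - b) * w (y - x) =
      f y * g y * w (y - x) - a * (g y * w (y - x)) - b * (f y * w (y - x)) +
        a * b * (1 * w (y - x)) := fun y => by ring
  rw [lcov, integral_congr_ae (.of_forall hexpand),
    integral_add (by exact (hfgw.sub (hgw.const_mul a)).sub (hfw.const_mul b)) (hW.const_mul _),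
    integral_sub (by exact hfgw.sub (hgw.const_mul a)) (hfw.const_mul b),
    integral_sub hfgw (hgw.const_mul a), integral_const_mul, integral_const_mul,
    integral_const_mul]
  simp only [one_mul, a, b, lmu]
  ring

theorem lcov_self_sub_two_mul_add (hw : Continuous w) (hC : ∀ z, ‖w z‖ ≤ C)
    (hf : MemLp f 2 (ν.restrict Ω)) (hg : MemLp g 2 (ν.restrict Ω)) :
    lcov Ω ν w f f x - 2 * lcov Ω ν w f g x + lcov Ω ν w g g x =
      lcov Ω ν w (fun y => f y - g y) (fun y => f y - g y) x := by
  have hf' : MemLp (fun y => f y - lmu Ω ν w f x) 2 (ν.restrict Ω) := hf.sub (memLp_const _)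
  have hg' : MemLp (fun y => g y - lmu Ω ν w g x) 2 (ν.restrict Ω) := hg.sub (memLp_const _)
  have hff := integrable_mul_mul_kernel hw hC hf' hf' x
  have hfg := (integrable_mul_mul_kernel hw hC hf' hg' x).const_mul 2
  have hgg := integrable_mul_mul_kernel hw hC hg' hg' x
  simp only [lcov]
  rw [lmu_sub hw hC (hf.integrable one_le_two) (hg.integrable one_le_two), ← integral_const_mul,
    ← integral_sub hff hfg, ← integral_add (by exact hff.sub hfg) hgg]
  congr 1 with y
  ring

theorem continuous_lcov (hw : Continuous w) (hC : ∀ z, ‖w z‖ ≤ C)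
    (hf : MemLp f 2 (ν.restrict Ω)) (hg : MemLp g 2 (ν.restrict Ω)) :
    Continuous (lcov Ω ν w f g) := by
  refine Continuous.congr ?_ fun x => (lcov_eq_integral_mul_add (x := x) hw hC hf hg).symm
  exact (continuous_integral_mul_kernel hw hC (hf.integrable_mul hg)).add
    (((continuous_lmu hw hC (hf.integrable one_le_two)).mul
      (continuous_lmu hw hC (hg.integrable one_le_two))).mul
      ((continuous_integral_kernel hw hC).sub continuous_const))

theorem integral_sq_sub_mul_kernel (hw : Continuous w) (hC : ∀ z, ‖w z‖ ≤ C)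
    (hf : MemLp f 2 (ν.restrict Ω)) (hg : MemLp g 2 (ν.restrict Ω))
    (hW : ∫ y in Ω, w (y - x) ∂ν = 1) :
    ∫ y in Ω, (f y - g y) ^ 2 * w (y - x) ∂ν = (lmu Ω ν w f x - lmu Ω ν w g x) ^ 2 +
      (lcov Ω ν w f f x - 2 * lcov Ω ν w f g x + lcov Ω ν w g g x) := by
  have hfg : MemLp (fun y => f y - g y) 2 (ν.restrict Ω) := hf.sub hg
  rw [lcov_self_sub_two_mul_add hw hC hf hg, lcov_eq_integral_mul_add hw hC hfg hfg, hW,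
    lmu_sub hw hC (hf.integrable one_le_two) (hg.integrable one_le_two)]
  simp only [sq]
  ring

theorem continuous_lq (hw : Continuous w) (hC : ∀ z, ‖w z‖ ≤ C) (hw0 : ∀ z, 0 ≤ w z)
    (hf : MemLp f 2 (ν.restrict Ω)) (hg : MemLp g 2 (ν.restrict Ω)) (hc1 : 0 < c1)
    (hc2 : 0 < c2) : Continuous (lq Ω ν w f g c1 c2) := by
  have hμf := continuous_lmu hw hC (hf.integrable one_le_two)
  have hμg := continuous_lmu hw hC (hg.integrable one_le_two)
  have hden1 : ∀ x, lmu Ω ν w f x ^ 2 + lmu Ω ν w g x ^ 2 + c1 ≠ 0 := fun x => by positivity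
  have hden2 : ∀ x, lcov Ω ν w f f x + lcov Ω ν w g g x + c2 ≠ 0 := fun x =>
    (add_pos_of_nonneg_of_pos (add_nonneg (lcov_self_nonneg hw0) (lcov_self_nonneg hw0)) hc2).ne'
  exact ((((continuous_const.mul hμf).mul hμg).add continuous_const).div
    (((hμf.pow 2).add (hμg.pow 2)).add continuous_const) hden1).mul
    (((continuous_const.mul (continuous_lcov hw hC hf hg)).add continuous_const).div
      (((continuous_lcov hw hC hf hf).add (continuous_lcov hw hC hg hg)).add continuous_const)
      hden2)

theorem abs_one_sub_lq_le (hw : Continuous w) (hC : ∀ z, ‖w z‖ ≤ C) (hw0 : ∀ z, 0 ≤ w z)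
    (hf : MemLp f 2 (ν.restrict Ω)) (hg : MemLp g 2 (ν.restrict Ω))
    (hf0 : 0 ≤ᵐ[ν.restrict Ω] f) (hg0 : 0 ≤ᵐ[ν.restrict Ω] g) (hc1 : 0 < c1) (hc2 : 0 < c2)
    (hW : ∫ y in Ω, w (y - x) ∂ν = 1) :
    |1 - lq Ω ν w f g c1 c2 x| ≤
      (1 / c1 + 1 / c2) * ∫ y in Ω, (f y - g y) ^ 2 * w (y - x) ∂ν := by
  rw [integral_sq_sub_mul_kernel hw hC hf hg hW]
  refine abs_one_sub_ssim_le (lmu_nonneg hw0 hf0) (lmu_nonneg hw0 hg0) (lcov_self_nonneg hw0)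
    (lcov_self_nonneg hw0) ?_ hc1 hc2
  rw [lcov_self_sub_two_mul_add hw hC hf hg]
  exact lcov_self_nonneg hw0

end LocalStatistics

theorem stmt_15_general {d : ℕ} (Ω : Set (Fin d → ℝ))
    (ν : Measure (Fin d → ℝ)) [IsProbabilityMeasure (ν.restrict Ω)]
    (w : (Fin d → ℝ) → ℝ) (hw : Continuous w) (hwpos : ∀ z, 0 < w z)
    (wmax : ℝ) (hwmax : ∀ z, w z ≤ wmax)
    (hnorm : ∀ x ∈ Ω, ∫ y in Ω, w (y - x) ∂ν = 1)
    (hnorm' : ∀ y ∈ Ω, ∫ x in Ω, w (y - x) ∂ν = 1)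
    (f g : (Fin d → ℝ) → ℝ)
    (hf : MemLp f 2 (ν.restrict Ω)) (hg : MemLp g 2 (ν.restrict Ω))
    (hf0 : 0 ≤ᵐ[ν.restrict Ω] f) (hg0 : 0 ≤ᵐ[ν.restrict Ω] g)
    (c1 c2 : ℝ) (hc1 : 0 < c1) (hc2 : 0 < c2) :
    |1 - wcSSIM Ω ν w f g c1 c2| ≤
      (4 / c2 + 1 / c1) * ∫ y in Ω, (f y - g y) ^ 2 ∂ν := by
  have hw0 : ∀ z, 0 ≤ w z := fun z => (hwpos z).le
  have hC : ∀ z, ‖w z‖ ≤ wmax := fun z => (Real.norm_of_nonneg (hw0 z)).trans_le (hwmax z)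
  -- `Ω` need not be measurable, but the closed sets where the normalizations hold contain it
  have hW : ∀ᵐ x ∂ν.restrict Ω, ∫ y in Ω, w (y - x) ∂ν = 1 :=
    (ae_restrict_iff (isClosed_eq (continuous_integral_kernel hw hC)
      continuous_const).measurableSet).2 (.of_forall hnorm)
  have hW' : ∀ᵐ y ∂ν.restrict Ω, ∫ x in Ω, w (y - x) ∂ν = 1 :=
    (ae_restrict_iff (isClosed_eq (continuous_integral_kernel_swap hw hC)
      continuous_const).measurableSet).2 (.of_forall hnorm')
  have hd : Integrable (fun y => (f y - g y) ^ 2) (ν.restrict Ω) := (hf.sub hg).integrable_sq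
  have hbound : ∀ᵐ x ∂ν.restrict Ω, ‖1 - lq Ω ν w f g c1 c2 x‖ ≤
      (1 / c1 + 1 / c2) * ∫ y in Ω, (f y - g y) ^ 2 * w (y - x) ∂ν :=
    hW.mono fun x hx => abs_one_sub_lq_le hw hC hw0 hf hg hf0 hg0 hc1 hc2 hx
  have hG := (integrable_integral_mul_kernel hw hC hd).const_mul (1 / c1 + 1 / c2)
  have hdefect : Integrable (fun x => 1 - lq Ω ν w f g c1 c2 x) (ν.restrict Ω) :=
    hG.mono' (continuous_const.sub (continuous_lq hw hC hw0 hf hg hc1 hc2)).aestronglyMeasurable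
      hbound
  have hlq : Integrable (lq Ω ν w f g c1 c2) (ν.restrict Ω) :=
    ((integrable_const 1).sub hdefect).congr (.of_forall fun _ => sub_sub_cancel _ _)
  calc |1 - wcSSIM Ω ν w f g c1 c2| = |∫ x in Ω, (1 - lq Ω ν w f g c1 c2 x) ∂ν| := by
        rw [integral_sub (integrable_const 1) hlq]; simp [wcSSIM]
    _ ≤ ∫ x in Ω, (1 / c1 + 1 / c2) * ∫ y in Ω, (f y - g y) ^ 2 * w (y - x) ∂ν ∂ν :=
        (norm_integral_le_integral_norm _).trans (integral_mono_ae hdefect.norm hG hbound)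
    _ = (1 / c1 + 1 / c2) * ∫ y in Ω, (f y - g y) ^ 2 ∂ν := by
        rw [integral_const_mul, integral_integral_mul_kernel hw hC hd hW']
    _ ≤ (4 / c2 + 1 / c1) * ∫ y in Ω, (f y - g y) ^ 2 ∂ν := by
        have : 1 / c2 ≤ 4 / c2 := by gcongr; norm_num
        exact mul_le_mul_of_nonneg_right (by linarith) (integral_nonneg fun _ => sq_nonneg _)

theorem stmt_15 {d : ℕ} (Ω : Set (Fin d → ℝ)) (hΩ : Bornology.IsBounded Ω)
    (ν : Measure (Fin d → ℝ)) [IsProbabilityMeasure (ν.restrict Ω)]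
    (w : (Fin d → ℝ) → ℝ) (hw : Continuous w) (hwpos : ∀ z, 0 < w z)
    (wmax : ℝ) (hwmax : ∀ z, w z ≤ wmax)
    (hnorm : ∀ x ∈ Ω, ∫ y in Ω, w (y - x) ∂ν = 1)
    (hnorm' : ∀ y ∈ Ω, ∫ x in Ω, w (y - x) ∂ν = 1)
    (f g : (Fin d → ℝ) → ℝ)
    (hf : MemLp f 2 (ν.restrict Ω)) (hg : MemLp g 2 (ν.restrict Ω))
    (hf0 : 0 ≤ᵐ[ν.restrict Ω] f) (hg0 : 0 ≤ᵐ[ν.restrict Ω] g)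
    (c1 c2 : ℝ) (hc1 : 0 < c1) (hc2 : 0 < c2) :
    |1 - wcSSIM Ω ν w f g c1 c2| ≤
      (4 / c2 + 1 / c1) * ∫ y in Ω, (f y - g y) ^ 2 ∂ν :=
  stmt_15_general Ω ν w hw hwpos wmax hwmax hnorm hnorm' f g hf hg hf0 hg0 c1 c2 hc1 hc2
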